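/- Let p, ξ be real numbers with 0 ≤ p ≤ 1 and 0 ≤ ξ ≤ 1, and let J := ρ_sim(p,ξ) − ρ_p, a Hermitian 4×4 matrix. Then the partial trace of the absolute value of J over the second tensor factor is a scalar matrix: the 2×2 matrix with entries (a,b) ↦ ∑_{k} (√(JᴴJ))((a,k),(b,k)) equals (ξ/8)·(2(1−p) + a₋ + a₊)·I₂, where a₊ := √(1−p)·√(5 + 4√(1−p) − p), a₋ := √(1−p)·√(5 − 4√(1−p) − p), and I₂ is the 2×2 identity matrix. -/

import Mathlib

open Matrix
open scoped ComplexOrder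

open Classical in
/-- Positive semidefinite square root of a matrix (zero if not PSD). -/
noncomputable def msqrt {n : Type*} [Fintype n] [DecidableEq n] (A : Matrix n n ℂ) :
    Matrix n n ℂ :=
  if h : A.PosSemidef then
    h.1.eigenvectorUnitary.1 * diagonal ((↑) ∘ (√·) ∘ h.1.eigenvalues) *
      (star h.1.eigenvectorUnitary : Matrix n n ℂ)
  else 0

/-- Reindex a 4×4 matrix by pairs of qubit indices, with ordering 00,01,10,11. -/
def toPair (A : Matrix (Fin 4) (Fin 4) ℂ) :
    Matrix (Fin 2 × Fin 2) (Fin 2 × Fin 2) ℂ :=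
  Matrix.reindex finProdFinEquiv.symm finProdFinEquiv.symm A

/-- Choi matrix of the amplitude damping channel with damping probability `p`
(rows/columns ordered 00,01,10,11). -/
noncomputable def rhoAD (p : ℝ) : Matrix (Fin 2 × Fin 2) (Fin 2 × Fin 2) ℂ :=
  toPair !![1 / 2, 0, 0, (Real.sqrt (1 - p) : ℂ) / 2;
            0, 0, 0, 0;
            0, 0, (p : ℂ) / 2, 0;
            (Real.sqrt (1 - p) : ℂ) / 2, 0, 0, ((1 - p : ℝ) : ℂ) / 2]

/-- Choi matrix of the M-port PBT simulation of the amplitude damping channel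
(rows/columns ordered 00,01,10,11). -/
noncomputable def rhoSim (p ξ : ℝ) : Matrix (Fin 2 × Fin 2) (Fin 2 × Fin 2) ℂ :=
  toPair !![((1 / 2 - (1 - p) * ξ / 4 : ℝ) : ℂ), 0, 0,
              ((Real.sqrt (1 - p) * (1 / 2 - ξ / 2) : ℝ) : ℂ);
            0, (((1 - p) * ξ / 4 : ℝ) : ℂ), 0, 0;
            0, 0, (((1 / 2 - ξ / 4) * p + ξ / 4 : ℝ) : ℂ), 0;
            ((Real.sqrt (1 - p) * (1 / 2 - ξ / 2) : ℝ) : ℂ), 0, 0,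
              (((1 / 2 - ξ / 4) * (1 - p) : ℝ) : ℂ)]

/-!
With `s = √(1 - p)`, the difference `J = ρ_sim - ρ_p` is `ξ/4` times a matrix that is `s²` on
`|01⟩, |10⟩` and `-[[s², 2s], [2s, s²]]` on `span {|00⟩, |11⟩}`; the latter block has eigenvalues
`-(s² + 2s)` on `|00⟩ + |11⟩` and `2s - s² ≥ 0` on `|00⟩ - |11⟩`. Hence `|J| = √(JᴴJ)` is the
positive semidefinite matrix `absSimDiff s ξ` below, identified by uniqueness of positive square
roots, and its partial trace is `ξ (2s + s²) / 4` times the identity. The radicals in the claim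
collapse because `5 ∓ 4s - p = (2 ∓ s)²`.
-/
section msqrt

variable {n : Type*} [Fintype n] [DecidableEq n]

open scoped MatrixOrder in
theorem msqrt_eq_cfcSqrt {A : Matrix n n ℂ} (hA : A.PosSemidef) : msqrt A = CFC.sqrt A := by
  rw [CFC.sqrt_eq_cfc, cfc_nnreal_eq_real _ _, hA.1.cfc_eq, msqrt, dif_pos hA]
  simp only [IsHermitian.cfc, Unitary.conjStarAlgAut_apply]
  congr 3
  funext i
  simp [Real.coe_sqrt, Real.coe_toNNReal', max_eq_left (hA.eigenvalues_nonneg i)]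

open scoped MatrixOrder in
theorem msqrt_eq_of_mul_self_eq {A M : Matrix n n ℂ} (hM : M.PosSemidef) (h : M * M = A) :
    msqrt A = M := by
  have hA : A.PosSemidef := by
    simpa only [← h, hM.1.eq] using Matrix.posSemidef_conjTranspose_mul_self M
  rw [msqrt_eq_cfcSqrt hA]
  exact CFC.sqrt_unique h (Matrix.nonneg_iff_posSemidef.mpr hM)

end msqrt

noncomputable def simDiff (s ξ : ℝ) : Matrix (Fin 2 × Fin 2) (Fin 2 × Fin 2) ℂ :=
  toPair !![-((ξ * s ^ 2 / 4 : ℝ) : ℂ), 0, 0, -((ξ * s / 2 : ℝ) : ℂ);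
            0, ((ξ * s ^ 2 / 4 : ℝ) : ℂ), 0, 0;
            0, 0, ((ξ * s ^ 2 / 4 : ℝ) : ℂ), 0;
            -((ξ * s / 2 : ℝ) : ℂ), 0, 0, -((ξ * s ^ 2 / 4 : ℝ) : ℂ)]

noncomputable def absSimDiff (s ξ : ℝ) : Matrix (Fin 2 × Fin 2) (Fin 2 × Fin 2) ℂ :=
  toPair !![((ξ * s / 2 : ℝ) : ℂ), 0, 0, ((ξ * s ^ 2 / 4 : ℝ) : ℂ);
            0, ((ξ * s ^ 2 / 4 : ℝ) : ℂ), 0, 0;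
            0, 0, ((ξ * s ^ 2 / 4 : ℝ) : ℂ), 0;
            ((ξ * s ^ 2 / 4 : ℝ) : ℂ), 0, 0, ((ξ * s / 2 : ℝ) : ℂ)]

theorem rhoSim_sub_rhoAD {p : ℝ} (ξ : ℝ) (hp : p ≤ 1) :
    rhoSim p ξ - rhoAD p = simDiff (Real.sqrt (1 - p)) ξ := by
  have hs : Real.sqrt (1 - p) ^ 2 = 1 - p := Real.sq_sqrt (by linarith)
  ext ⟨i, k⟩ ⟨j, l⟩
  fin_cases i <;> fin_cases k <;> fin_cases j <;> fin_cases l <;>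
    simp [rhoSim, rhoAD, simDiff, toPair, finProdFinEquiv, hs] <;>
    ring

theorem absSimDiff_mul_self (s ξ : ℝ) :
    absSimDiff s ξ * absSimDiff s ξ = (simDiff s ξ)ᴴ * simDiff s ξ := by
  ext ⟨i, k⟩ ⟨j, l⟩
  fin_cases i <;> fin_cases k <;> fin_cases j <;> fin_cases l <;>
    simp [absSimDiff, simDiff, Matrix.mul_apply, Fintype.sum_prod_type, conjTranspose_apply,
      toPair, finProdFinEquiv, map_ofNat] <;>
    ring

theorem absSimDiff_posSemidef {s ξ : ℝ} (hξ : 0 ≤ ξ) (hs0 : 0 ≤ s) (hs2 : s ≤ 2) :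
    (absSimDiff s ξ).PosSemidef := by
  set a := Real.sqrt (ξ * s * (2 - s) / 8)
  set b := Real.sqrt (ξ * s * (2 + s) / 8)
  set c := Real.sqrt (ξ * s ^ 2 / 4)
  have ha : (a : ℂ) * a = ((ξ * s * (2 - s) / 8 : ℝ) : ℂ) := by
    rw [← Complex.ofReal_mul, Real.mul_self_sqrt (by have := sub_nonneg.2 hs2; positivity)]
  have hb : (b : ℂ) * b = ((ξ * s * (2 + s) / 8 : ℝ) : ℂ) := by
    rw [← Complex.ofReal_mul, Real.mul_self_sqrt (by positivity)]
  have hc : (c : ℂ) * c = ((ξ * s ^ 2 / 4 : ℝ) : ℂ) := by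
    rw [← Complex.ofReal_mul, Real.mul_self_sqrt (by positivity)]
  have hgram : (toPair !![(a : ℂ), 0, 0, -(a : ℂ); (b : ℂ), 0, 0, (b : ℂ);
      0, (c : ℂ), 0, 0; 0, 0, (c : ℂ), 0])ᴴ *
      toPair !![(a : ℂ), 0, 0, -(a : ℂ); (b : ℂ), 0, 0, (b : ℂ);
      0, (c : ℂ), 0, 0; 0, 0, (c : ℂ), 0] = absSimDiff s ξ := by
    ext ⟨i, k⟩ ⟨j, l⟩
    fin_cases i <;> fin_cases k <;> fin_cases j <;> fin_cases l <;>
      simp [absSimDiff, Matrix.mul_apply, Fintype.sum_prod_type, conjTranspose_apply,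
        toPair, finProdFinEquiv, ha, hb, hc] <;>
      ring
  exact hgram ▸ Matrix.posSemidef_conjTranspose_mul_self _

theorem partialTrace_absSimDiff (s ξ : ℝ) :
    (Matrix.of fun a b : Fin 2 => ∑ k : Fin 2, absSimDiff s ξ (a, k) (b, k)) =
      ((ξ * (2 * s + s ^ 2) / 4 : ℝ) : ℂ) • (1 : Matrix (Fin 2) (Fin 2) ℂ) := by
  ext a b
  fin_cases a <;> fin_cases b <;>
    simp [absSimDiff, toPair, finProdFinEquiv] <;>
    ring

theorem sqrt_one_sub_le_two {p : ℝ} (hp : -3 ≤ p) : Real.sqrt (1 - p) ≤ 2 :=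
  Real.sqrt_le_iff.2 ⟨by norm_num, by linarith⟩

theorem sqrt_five_sub_four_mul_sqrt {p : ℝ} (hp3 : -3 ≤ p) (hp1 : p ≤ 1) :
    Real.sqrt (5 - 4 * Real.sqrt (1 - p) - p) = 2 - Real.sqrt (1 - p) := by
  have hs : Real.sqrt (1 - p) ^ 2 = 1 - p := Real.sq_sqrt (by linarith)
  rw [show 5 - 4 * Real.sqrt (1 - p) - p = (2 - Real.sqrt (1 - p)) ^ 2 by nlinarith]
  exact Real.sqrt_sq (by linarith [sqrt_one_sub_le_two hp3])

theorem sqrt_five_add_four_mul_sqrt {p : ℝ} (hp1 : p ≤ 1) :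
    Real.sqrt (5 + 4 * Real.sqrt (1 - p) - p) = 2 + Real.sqrt (1 - p) := by
  have hs : Real.sqrt (1 - p) ^ 2 = 1 - p := Real.sq_sqrt (by linarith)
  rw [show 5 + 4 * Real.sqrt (1 - p) - p = (2 + Real.sqrt (1 - p)) ^ 2 by nlinarith]
  exact Real.sqrt_sq (by positivity)

theorem partial_trace_abs_sim_minus_ad_scalar_general (p ξ : ℝ)
    (hp0 : 0 ≤ p) (hp1 : p ≤ 1) (hξ0 : 0 ≤ ξ)
    (J : Matrix (Fin 2 × Fin 2) (Fin 2 × Fin 2) ℂ) (hJ : J = rhoSim p ξ - rhoAD p) :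
    (Matrix.of fun a b : Fin 2 => ∑ k : Fin 2, msqrt (Jᴴ * J) (a, k) (b, k)) =
      ((ξ / 8 * (2 * (1 - p) +
          Real.sqrt (1 - p) * Real.sqrt (5 - 4 * Real.sqrt (1 - p) - p) +
          Real.sqrt (1 - p) * Real.sqrt (5 + 4 * Real.sqrt (1 - p) - p)) : ℝ) : ℂ) •
        (1 : Matrix (Fin 2) (Fin 2) ℂ) := by
  have hp3 : -3 ≤ p := by linarith
  have habs : msqrt (Jᴴ * J) = absSimDiff (Real.sqrt (1 - p)) ξ := by
    rw [hJ, rhoSim_sub_rhoAD ξ hp1]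
    exact msqrt_eq_of_mul_self_eq
      (absSimDiff_posSemidef hξ0 (Real.sqrt_nonneg _) (sqrt_one_sub_le_two hp3))
      (absSimDiff_mul_self _ _)
  rw [habs, partialTrace_absSimDiff, sqrt_five_sub_four_mul_sqrt hp3 hp1,
    sqrt_five_add_four_mul_sqrt hp1, Real.sq_sqrt (by linarith : 0 ≤ 1 - p)]
  congr 2
  ring

theorem partial_trace_abs_sim_minus_ad_scalar (p ξ : ℝ)
    (hp0 : 0 ≤ p) (hp1 : p ≤ 1) (hξ0 : 0 ≤ ξ) (hξ1 : ξ ≤ 1)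
    (J : Matrix (Fin 2 × Fin 2) (Fin 2 × Fin 2) ℂ) (hJ : J = rhoSim p ξ - rhoAD p) :
    (Matrix.of fun a b : Fin 2 => ∑ k : Fin 2, msqrt (Jᴴ * J) (a, k) (b, k)) =
      ((ξ / 8 * (2 * (1 - p) +
          Real.sqrt (1 - p) * Real.sqrt (5 - 4 * Real.sqrt (1 - p) - p) +
          Real.sqrt (1 - p) * Real.sqrt (5 + 4 * Real.sqrt (1 - p) - p)) : ℝ) : ℂ) •
        (1 : Matrix (Fin 2) (Fin 2) ℂ) :=
  partial_trace_abs_sim_minus_ad_scalar_general p ξ hp0 hp1 hξ0 J hJ
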